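/- arXiv:2203.09607 — 5 statements merged into one kernel-verified Lean document; each statement's English description precedes it below -/
import Mathlib

section
/- Let m ≥ 1, γ > 0 and a_1, …, a_m ∈ ℝ, and set ā = (1/m) Σ_{i=1}^m a_i. Assume a_i − ā ≥ −γ for every i. Then max over p in the probability simplex Δ_m of [ Σ_{i=1}^m p_i a_i − (γ m / 2) Σ_{i=1}^m (p_i − 1/m)² ] equals ā + (1/(2γm)) Σ_{i=1}^m (a_i − ā)², and this maximum is attained at p*_i = (1/m) · (1 + (a_i − ā)/γ). In particular the optimal value equals the finite-sum composite expression (1/m) Σ_{i=1}^m a_i + (1/(2γm)) Σ_{i=1}^m a_i² − (1/(2γ)) ( (1/m) Σ_{i=1}^m a_i )². -/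
open scoped BigOperators

open Finset

section ChiSquaredDRO

variable {ι : Type*} [Fintype ι] {a : ι → ℝ} {abar γ : ℝ}

lemma sum_sub_mean_eq_zero (habar : abar = (1 / (Fintype.card ι : ℝ)) * ∑ i, a i) :
    ∑ i, (a i - abar) = 0 := by
  rcases isEmpty_or_nonempty ι with hι | hι
  · simp
  · have hn : (Fintype.card ι : ℝ) ≠ 0 := by positivity
    rw [sum_sub_distrib, sum_const, card_univ, nsmul_eq_mul, habar]
    field_simp
    ring

lemma sum_sub_mean_sq (habar : abar = (1 / (Fintype.card ι : ℝ)) * ∑ i, a i) :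
    ∑ i, (a i - abar) ^ 2 = ∑ i, a i ^ 2 - Fintype.card ι * abar ^ 2 := by
  have hsum := sum_sub_mean_eq_zero habar
  calc ∑ i, (a i - abar) ^ 2 = ∑ i, (a i ^ 2 - abar ^ 2 - 2 * abar * (a i - abar)) :=
        sum_congr rfl fun i _ => by ring
    _ = ∑ i, a i ^ 2 - Fintype.card ι * abar ^ 2 := by
        rw [sum_sub_distrib, sum_sub_distrib, ← mul_sum, hsum, sum_const, card_univ,
          nsmul_eq_mul]
        ring

variable {pstar : ι → ℝ}

lemma chiSq_maximizer_nonneg (hγ : 0 < γ) (ha : ∀ i, a i - abar ≥ -γ)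
    (hpstar : ∀ i, pstar i = (1 / (Fintype.card ι : ℝ)) * (1 + (a i - abar) / γ)) (i : ι) :
    0 ≤ pstar i := by
  have : -1 ≤ (a i - abar) / γ := by
    rw [le_div_iff₀ hγ]
    linarith [ha i]
  rw [hpstar i]
  exact mul_nonneg (by positivity) (by linarith)

lemma sum_chiSq_maximizer [Nonempty ι]
    (habar : abar = (1 / (Fintype.card ι : ℝ)) * ∑ i, a i)
    (hpstar : ∀ i, pstar i = (1 / (Fintype.card ι : ℝ)) * (1 + (a i - abar) / γ)) :
    ∑ i, pstar i = 1 := by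
  have hn : (Fintype.card ι : ℝ) ≠ 0 := by positivity
  calc ∑ i, pstar i = ∑ _i : ι, 1 / (Fintype.card ι : ℝ) +
        (1 / (Fintype.card ι * γ)) * ∑ i, (a i - abar) := by
        rw [mul_sum, ← sum_add_distrib]
        exact sum_congr rfl fun i _ => by rw [hpstar i]; ring
    _ = 1 := by
        rw [sum_sub_mean_eq_zero habar, sum_const, card_univ, nsmul_eq_mul]
        field_simp
        ring

/-- Completing the square: on the hyperplane `∑ p = 1`, the objective falls short of its
value at `pstar` by `γ n / 2` times the squared distance to `pstar`. -/
lemma chiSq_objective_eq_sub_sq [Nonempty ι] (hγ : γ ≠ 0)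
    (habar : abar = (1 / (Fintype.card ι : ℝ)) * ∑ i, a i)
    (hpstar : ∀ i, pstar i = (1 / (Fintype.card ι : ℝ)) * (1 + (a i - abar) / γ))
    {p : ι → ℝ} (hp : ∑ i, p i = 1) :
    ∑ i, p i * a i - (γ * Fintype.card ι / 2) * ∑ i, (p i - 1 / (Fintype.card ι : ℝ)) ^ 2 =
      abar + (1 / (2 * γ * Fintype.card ι)) * ∑ i, (a i - abar) ^ 2 -
        (γ * Fintype.card ι / 2) * ∑ i, (p i - pstar i) ^ 2 := by
  set n : ℝ := (Fintype.card ι : ℝ)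
  have hn : n ≠ 0 := by positivity
  have pointwise : ∀ i, p i * a i - (γ * n / 2) * (p i - 1 / n) ^ 2 =
      p i * abar + (a i - abar) / n + (1 / (2 * γ * n)) * (a i - abar) ^ 2 -
        (γ * n / 2) * (p i - pstar i) ^ 2 := fun i => by
    rw [hpstar i]
    field_simp
    ring
  rw [mul_sum, mul_sum, mul_sum, ← sum_sub_distrib, sum_congr rfl fun i _ => pointwise i,
    sum_sub_distrib, sum_add_distrib, sum_add_distrib, ← sum_mul, hp, ← sum_div,
    sum_sub_mean_eq_zero habar]
  ring

end ChiSquaredDRO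

/-- Claim 1 (χ²-divergence DRO inner maximization): if `aᵢ - ā ≥ -γ` for all `i`, the
maximum of `Σ pᵢ aᵢ - (γ m/2) Σ (pᵢ - 1/m)²` over the simplex is attained at
`p*ᵢ = (1/m)(1 + (aᵢ - ā)/γ)`, equals `ā + (1/(2γm)) Σ (aᵢ - ā)²`, and this value
equals the finite-sum composite expression. -/
theorem dro_chi_squared_claim (m : ℕ) (hm : 1 ≤ m) (γ : ℝ) (hγ : 0 < γ) (a : Fin m → ℝ)
    (abar : ℝ) (habar : abar = (1 / (m : ℝ)) * ∑ i, a i)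
    (ha : ∀ i, a i - abar ≥ -γ)
    (pstar : Fin m → ℝ)
    (hpstar : ∀ i, pstar i = (1 / (m : ℝ)) * (1 + (a i - abar) / γ)) :
    (∀ i, 0 ≤ pstar i) ∧ (∑ i, pstar i) = 1 ∧
      (∑ i, pstar i * a i) - (γ * m / 2) * ∑ i, (pstar i - 1 / (m : ℝ)) ^ 2 =
        abar + (1 / (2 * γ * m)) * ∑ i, (a i - abar) ^ 2 ∧
      (∀ p : Fin m → ℝ, (∀ i, 0 ≤ p i) → (∑ i, p i) = 1 →
        (∑ i, p i * a i) - (γ * m / 2) * ∑ i, (p i - 1 / (m : ℝ)) ^ 2 ≤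
          abar + (1 / (2 * γ * m)) * ∑ i, (a i - abar) ^ 2) ∧
      abar + (1 / (2 * γ * m)) * ∑ i, (a i - abar) ^ 2 =
        (1 / (m : ℝ)) * ∑ i, a i + (1 / (2 * γ * m)) * ∑ i, (a i) ^ 2 -
          (1 / (2 * γ)) * ((1 / (m : ℝ)) * ∑ i, a i) ^ 2 := by
  have : Nonempty (Fin m) := ⟨⟨0, hm⟩⟩
  have hcard : (Fintype.card (Fin m) : ℝ) = m := by rw [Fintype.card_fin]
  rw [← hcard] at habar hpstar ⊢
  have hpstar_sum := sum_chiSq_maximizer habar hpstar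
  refine ⟨chiSq_maximizer_nonneg hγ ha hpstar, hpstar_sum, ?_, fun p _ hp => ?_, ?_⟩
  · rw [chiSq_objective_eq_sub_sq hγ.ne' habar hpstar hpstar_sum]
    simp
  · rw [chiSq_objective_eq_sub_sq hγ.ne' habar hpstar hp]
    have : 0 ≤ (γ * Fintype.card (Fin m) / 2) * ∑ i, (p i - pstar i) ^ 2 := by positivity
    linarith
  · have hn : (Fintype.card (Fin m) : ℝ) ≠ 0 := by positivity
    rw [sum_sub_mean_sq habar, ← habar]
    field_simp
    ring
end

section
/- Let E be a finite-dimensional Euclidean (real inner product) space, let g : E → ℝ be convex and differentiable, let ρ > 0 and assume ‖∇g(y)‖ ≥ ρ for every y ∈ E with g(y) = 0. Let K = {y ∈ E : g(y) ≤ 0} be nonempty, let x ∈ E satisfy g(x) > 0, and let x̄ be the metric projection of x onto K (the unique nearest point of the closed convex set K to x). Then g(x) ≥ ρ ‖x − x̄‖. -/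
/-!
Write `v = x - x̄` and `G = ∇g(x̄)`. Since `x̄` is the projection onto the convex set `K`,
`⟪v, y - x̄⟫ ≤ 0` for all `y ∈ K`. Convexity then forces `g(x̄) = 0`: otherwise the chord of `g`
from `x̄` to `x` vanishes strictly between them, at a point of `K` closer to `x`. Every direction
`w` with `⟪G, w⟫ < 0` enters `K` from `x̄`, so `⟪v, w⟫ ≤ 0`, which makes `v` a nonnegative multiple
of `G`; hence `⟪G, v⟫ = ‖G‖‖v‖ ≥ ρ‖v‖`, and the gradient inequality `g(x) ≥ g(x̄) + ⟪G, v⟫` ends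
the proof.
-/

open Set
open scoped RealInnerProductSpace

section

variable {E : Type*} [NormedAddCommGroup E] [InnerProductSpace ℝ E]

theorem real_inner_sub_nonpos_of_forall_norm_sub_le {K : Set E} (hK : Convex ℝ K) {u v : E}
    (hv : v ∈ K) (h : ∀ w ∈ K, ‖u - v‖ ≤ ‖u - w‖) : ∀ w ∈ K, ⟪u - v, w - v⟫ ≤ 0 := by
  have : Nonempty K := ⟨⟨v, hv⟩⟩
  refine (norm_eq_iInf_iff_real_inner_le_zero hK hv).1 (le_antisymm ?_ ?_)
  · exact le_ciInf fun w => h w w.2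
  · exact ciInf_le ⟨0, forall_mem_range.2 fun _ => norm_nonneg _⟩ (⟨v, hv⟩ : K)

theorem norm_mul_norm_le_real_inner_of_forall_inner_neg {G v : E}
    (h : ∀ w, ⟪G, w⟫ < 0 → ⟪v, w⟫ ≤ 0) : ‖G‖ * ‖v‖ ≤ ⟪G, v⟫ := by
  by_contra! hlt
  have hG : 0 < ‖G‖ := norm_pos_iff.2 (by rintro rfl; simp at hlt)
  have hv : 0 < ‖v‖ := norm_pos_iff.2 (by rintro rfl; simp at hlt)
  have hinner : ⟪v, G⟫ = ⟪G, v⟫ := real_inner_comm G v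
  -- pairing `‖G‖ • v - ‖v‖ • G` with `G` and with `v` gives `-‖G‖` and `‖v‖` times the
  -- Cauchy–Schwarz defect `‖G‖ * ‖v‖ - ⟪G, v⟫`
  have hw := h (‖G‖ • v - ‖v‖ • G) (by
    rw [inner_sub_right, real_inner_smul_right, real_inner_smul_right,
      real_inner_self_eq_norm_sq]
    nlinarith)
  rw [inner_sub_right, real_inner_smul_right, real_inner_smul_right,
    real_inner_self_eq_norm_sq, hinner] at hw
  nlinarith

theorem ConvexOn.eq_zero_of_forall_real_inner_sub_nonpos {g : E → ℝ}
    (hg : ConvexOn ℝ univ g) {x p : E} (hx : 0 < g x) (hp : g p ≤ 0)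
    (h : ∀ y, g y ≤ 0 → ⟪x - p, y - p⟫ ≤ 0) : g p = 0 := by
  refine hp.antisymm (not_lt.1 fun hneg => ?_)
  -- the chord of `g` from `p` to `x` vanishes at `t`
  set t := g p / (g p - g x)
  have ht : 0 < t := div_pos_of_neg_of_neg hneg (by linarith)
  have ht1 : t ≤ 1 := (div_le_one_of_neg (by linarith)).2 (by linarith)
  have hy : g ((1 - t) • p + t • x) ≤ 0 := by
    refine (hg.2 (mem_univ _) (mem_univ _) (by linarith) ht.le (by ring)).trans_eq ?_
    have hd : g p - g x ≠ 0 := by linarith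
    simp only [smul_eq_mul, t]
    field_simp
    ring
  have hyp := h _ hy
  rw [show (1 - t) • p + t • x - p = t • (x - p) by module, real_inner_smul_right,
    real_inner_self_eq_norm_sq] at hyp
  have hxp : x - p = 0 := by
    by_contra hne
    nlinarith [mul_pos ht (pow_pos (norm_pos_iff.2 hne) 2)]
  exact hx.not_ge (sub_eq_zero.1 hxp ▸ hp)

variable [CompleteSpace E] {f : E → ℝ} {a : E}

theorem exists_pos_lt_of_inner_gradient_neg (hf : DifferentiableAt ℝ f a) {w : E}
    (hw : ⟪gradient f a, w⟫ < 0) : ∃ t : ℝ, 0 < t ∧ f (a + t • w) < f a := by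
  rw [inner_gradient_left] at hw
  have hline : HasDerivAt (fun t : ℝ => a + t • w) w 0 := by
    simpa using ((hasDerivAt_id (0 : ℝ)).smul_const w).const_add a
  have hderiv : HasDerivAt (fun t : ℝ => f (a + t • w)) (fderiv ℝ f a w) 0 :=
    hf.hasFDerivAt.comp_hasDerivAt_of_eq 0 hline (by simp)
  have hslope := (hderiv.hasDerivWithinAt (s := Ioi 0)).limsup_slope_le' (lt_irrefl _) hw
  obtain ⟨t, hslope, ht⟩ := (hslope.and self_mem_nhdsWithin).exists
  refine ⟨t, ht, ?_⟩
  rwa [slope_def_field, sub_zero, div_lt_iff₀ ht, zero_mul, sub_neg, zero_smul, add_zero]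
    at hslope

theorem ConvexOn.inner_gradient_le_sub {s : Set E} (hf : ConvexOn ℝ s f) {b : E} (ha : a ∈ s)
    (hb : b ∈ s) (hd : DifferentiableAt ℝ f a) : ⟪gradient f a, b - a⟫ ≤ f b - f a := by
  have hderiv : HasDerivAt (f ∘ AffineMap.lineMap (k := ℝ) a b) (fderiv ℝ f a (b - a)) 0 :=
    hd.hasFDerivAt.comp_hasDerivAt_of_eq 0 AffineMap.hasDerivAt_lineMap (by simp)
  have := (hf.comp_affineMap (AffineMap.lineMap (k := ℝ) a b)).le_slope_of_hasDerivAt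
    (by simpa using ha) (by simpa using hb) zero_lt_one hderiv
  simpa [slope] using this

end

theorem constraint_violation_lower_bounds_distance_general
    {E : Type*} [NormedAddCommGroup E] [InnerProductSpace ℝ E] [FiniteDimensional ℝ E]
    (g : E → ℝ) (hconv : ConvexOn ℝ Set.univ g) (hdiff : Differentiable ℝ g)
    (ρ : ℝ)
    (hgrad : ∀ y, g y = 0 → ρ ≤ ‖gradient g y‖)
    (K : Set E) (hK : K = {y | g y ≤ 0})
    (x : E) (hx : 0 < g x)
    (xbar : E) (hxbar : xbar ∈ K) (hproj : ∀ y ∈ K, ‖x - xbar‖ ≤ ‖x - y‖) :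
    ρ * ‖x - xbar‖ ≤ g x := by
  subst hK
  have hvar := real_inner_sub_nonpos_of_forall_norm_sub_le
    (by simpa using hconv.convex_le 0) hxbar hproj
  have hzero : g xbar = 0 := hconv.eq_zero_of_forall_real_inner_sub_nonpos hx hxbar hvar
  have hpolar : ‖gradient g xbar‖ * ‖x - xbar‖ ≤ ⟪gradient g xbar, x - xbar⟫ := by
    refine norm_mul_norm_le_real_inner_of_forall_inner_neg fun w hw => ?_
    obtain ⟨t, ht, hlt⟩ := exists_pos_lt_of_inner_gradient_neg (hdiff xbar) hw
    have hmem := hvar (xbar + t • w) (show g _ ≤ 0 by linarith)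
    rw [add_sub_cancel_left, real_inner_smul_right] at hmem
    exact nonpos_of_mul_nonpos_right hmem ht
  calc ρ * ‖x - xbar‖ ≤ ‖gradient g xbar‖ * ‖x - xbar‖ := by gcongr; exact hgrad xbar hzero
    _ ≤ ⟪gradient g xbar, x - xbar⟫ := hpolar
    _ ≤ g x - g xbar := hconv.inner_gradient_le_sub (mem_univ _) (mem_univ _) (hdiff xbar)
    _ = g x := by rw [hzero, sub_zero]

/-- Distance-to-feasibility lemma: for convex differentiable `g` with `‖∇g‖ ≥ ρ` on the
boundary `{g = 0}`, any infeasible point `x` (with `g(x) > 0`) satisfies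
`g(x) ≥ ρ ‖x - x̄‖` where `x̄` is the metric projection of `x` onto `K = {g ≤ 0}`. -/
theorem constraint_violation_lower_bounds_distance
    {E : Type*} [NormedAddCommGroup E] [InnerProductSpace ℝ E] [FiniteDimensional ℝ E]
    (g : E → ℝ) (hconv : ConvexOn ℝ Set.univ g) (hdiff : Differentiable ℝ g)
    (ρ : ℝ) (hρ : 0 < ρ)
    (hgrad : ∀ y, g y = 0 → ρ ≤ ‖gradient g y‖)
    (K : Set E) (hK : K = {y | g y ≤ 0}) (hKne : K.Nonempty)
    (x : E) (hx : 0 < g x)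
    (xbar : E) (hxbar : xbar ∈ K) (hproj : ∀ y ∈ K, ‖x - xbar‖ ≤ ‖x - y‖) :
    ρ * ‖x - xbar‖ ≤ g x :=
  constraint_violation_lower_bounds_distance_general g hconv hdiff ρ hgrad K hK x hx xbar hxbar
    hproj
end

section
/- Let m ≥ 1, γ > 0, α > 0, δ ≥ 0, G ≥ 0 and ρ > 0 with αρ > G. Let r : ℝ^d → ℝ be G-Lipschitz, let g̃_1, …, g̃_m : ℝ^d → ℝ be such that K = {y : g̃_i(y) ≤ 0 for all i} is nonempty, closed and convex, and let x* be a minimizer of r over K. Let x ∈ ℝ^d, let x̄ be the metric projection of x onto K, and assume the error bound max_{1 ≤ i ≤ m} g̃_i(x) ≥ ρ ‖x − x̄‖ holds whenever x ∉ K. Define Ψ̄(x) = r(x) + γ ln( 1 + Σ_{i=1}^m exp( α g̃_i(x) / γ ) ) and assume Ψ̄(x) ≤ r(x*) + γ ln(m+1) + δ. Then ‖x − x̄‖ ≤ ( γ ln(m+1) + δ ) / ( αρ − G ). -/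
/-!
The smoothing term dominates both `0` and `α · max_i g̃_i(x)`, and by the error bound the latter
is at least `αρ‖x - x̄‖`; on the other hand `r(x) ≥ r(x̄) - G‖x - x̄‖ ≥ r(x*) - G‖x - x̄‖`.
Inserting both into the suboptimality bound leaves `(αρ - G)‖x - x̄‖ ≤ γ ln(m+1) + δ`.
-/

open Real

lemma mul_log_one_add_sum_exp_nonneg {ι : Type*} {γ : ℝ} (hγ : 0 ≤ γ) (s : Finset ι)
    (f : ι → ℝ) : 0 ≤ γ * log (1 + ∑ i ∈ s, exp (f i)) :=
  mul_nonneg hγ <| log_nonneg <| le_add_of_nonneg_right <| by positivity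

lemma Finset.sup'_le_mul_log_one_add_sum_exp_div {ι : Type*} {γ : ℝ} (hγ : 0 < γ)
    (s : Finset ι) (hs : s.Nonempty) (a : ι → ℝ) :
    s.sup' hs a ≤ γ * log (1 + ∑ i ∈ s, exp (a i / γ)) := by
  refine Finset.sup'_le hs a fun j hj => ?_
  have hterm : exp (a j / γ) ≤ 1 + ∑ i ∈ s, exp (a i / γ) := by
    have := Finset.single_le_sum (fun i _ => (exp_pos (a i / γ)).le) hj
    linarith
  calc a j = γ * log (exp (a j / γ)) := by rw [log_exp, mul_div_cancel₀ _ hγ.ne']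
    _ ≤ γ * log (1 + ∑ i ∈ s, exp (a i / γ)) := by gcongr

theorem distance_to_feasible_set_bound_general (m d : ℕ) (hm : 1 ≤ m) (γ α δ G ρ : ℝ)
    (hγ : 0 < γ) (hα : 0 < α)
    (hαρ : G < α * ρ)
    (r : EuclideanSpace ℝ (Fin d) → ℝ)
    (hr : ∀ a b, |r a - r b| ≤ G * ‖a - b‖)
    (gt : Fin m → EuclideanSpace ℝ (Fin d) → ℝ)
    (K : Set (EuclideanSpace ℝ (Fin d)))
    (xstar : EuclideanSpace ℝ (Fin d))
    (hmin : ∀ y ∈ K, r xstar ≤ r y)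
    (x xbar : EuclideanSpace ℝ (Fin d)) (hxbar : xbar ∈ K)
    (hproj : ∀ y ∈ K, ‖x - xbar‖ ≤ ‖x - y‖)
    (herr : x ∉ K → ρ * ‖x - xbar‖ ≤
      Finset.sup' Finset.univ ⟨⟨0, hm⟩, Finset.mem_univ _⟩ (fun i => gt i x))
    (hub : r x + γ * Real.log (1 + ∑ i, Real.exp (α * gt i x / γ)) ≤
      r xstar + γ * Real.log ((m : ℝ) + 1) + δ) :
    ‖x - xbar‖ ≤ (γ * Real.log ((m : ℝ) + 1) + δ) / (α * ρ - G) := by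
  have hpenalty : α * ρ * ‖x - xbar‖ ≤ γ * log (1 + ∑ i, exp (α * gt i x / γ)) := by
    by_cases hx : x ∈ K
    · have hzero : ‖x - xbar‖ = 0 := le_antisymm (by simpa using hproj x hx) (norm_nonneg _)
      rw [hzero, mul_zero]
      exact mul_log_one_add_sum_exp_nonneg hγ.le _ _
    · calc α * ρ * ‖x - xbar‖ = α * (ρ * ‖x - xbar‖) := mul_assoc _ _ _
        _ ≤ α * Finset.univ.sup' ⟨⟨0, hm⟩, Finset.mem_univ _⟩ (fun i => gt i x) := by
          gcongr
          exact herr hx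
        _ = Finset.univ.sup' ⟨⟨0, hm⟩, Finset.mem_univ _⟩ (fun i => α * gt i x) :=
          Finset.apply_sup'_eq_sup'_comp _ _ (monotone_mul_left_of_nonneg hα.le).map_sup
        _ ≤ γ * log (1 + ∑ i, exp (α * gt i x / γ)) :=
          Finset.sup'_le_mul_log_one_add_sum_exp_div hγ _ _ _
  have hlipschitz : r xstar - G * ‖x - xbar‖ ≤ r x := by
    have h := (abs_le.1 (hr xbar x)).2
    rw [norm_sub_rev] at h
    linarith [hmin xbar hxbar]
  rw [le_div_iff₀ (sub_pos.2 hαρ)]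
  linarith

/-- Distance-to-feasibility estimate in the proof of Theorem 1: if the iterate `x` is
`δ`-suboptimal for the augmented objective, then its distance to the feasible set `K`
is at most `(γ ln(m+1) + δ)/(αρ - G)`. -/
theorem distance_to_feasible_set_bound (m d : ℕ) (hm : 1 ≤ m) (γ α δ G ρ : ℝ)
    (hγ : 0 < γ) (hα : 0 < α) (hδ : 0 ≤ δ) (hG : 0 ≤ G) (hρ : 0 < ρ)
    (hαρ : G < α * ρ)
    (r : EuclideanSpace ℝ (Fin d) → ℝ)
    (hr : ∀ a b, |r a - r b| ≤ G * ‖a - b‖)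
    (gt : Fin m → EuclideanSpace ℝ (Fin d) → ℝ)
    (K : Set (EuclideanSpace ℝ (Fin d)))
    (hK : K = {y | ∀ i, gt i y ≤ 0})
    (hKne : K.Nonempty) (hKcl : IsClosed K) (hKconv : Convex ℝ K)
    (xstar : EuclideanSpace ℝ (Fin d)) (hxstar : xstar ∈ K)
    (hmin : ∀ y ∈ K, r xstar ≤ r y)
    (x xbar : EuclideanSpace ℝ (Fin d)) (hxbar : xbar ∈ K)
    (hproj : ∀ y ∈ K, ‖x - xbar‖ ≤ ‖x - y‖)
    (herr : x ∉ K → ρ * ‖x - xbar‖ ≤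
      Finset.sup' Finset.univ ⟨⟨0, hm⟩, Finset.mem_univ _⟩ (fun i => gt i x))
    (hub : r x + γ * Real.log (1 + ∑ i, Real.exp (α * gt i x / γ)) ≤
      r xstar + γ * Real.log ((m : ℝ) + 1) + δ) :
    ‖x - xbar‖ ≤ (γ * Real.log ((m : ℝ) + 1) + δ) / (α * ρ - G) :=
  distance_to_feasible_set_bound_general m d hm γ α δ G ρ hγ hα hαρ r hr gt K xstar hmin x xbar
    hxbar hproj herr hub
end

section
/- Let m ≥ 1, γ > 0, α > 0, δ ≥ 0, G ≥ 0 and ρ > 0 with αρ > G. Let r : ℝ^d → ℝ be G-Lipschitz, let g̃_1, …, g̃_m : ℝ^d → ℝ be such that K = {y : g̃_i(y) ≤ 0 for all i} is nonempty, closed and convex, and let x* be a minimizer of r over K. Let x ∈ ℝ^d, let x̄ be the metric projection of x onto K, and assume the error bound max_{1 ≤ i ≤ m} g̃_i(x) ≥ ρ ‖x − x̄‖ holds whenever x ∉ K. Define Ψ̄(x) = r(x) + γ ln( 1 + Σ_{i=1}^m exp( α g̃_i(x) / γ ) ) and assume Ψ̄(x) ≤ r(x*) + γ ln(m+1) + δ.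 Then r(x̄) − r(x*) ≤ G · ( γ ln(m+1) + δ ) / ( αρ − G ) + γ ln(m+1) + δ. -/
/-!
An exact-penalty argument. The smoothed penalty `γ ln(1 + Σ exp(α g̃ᵢ(x)/γ))` dominates
`α max g̃ᵢ(x) ≥ αρ ‖x - x̄‖ ≥ G ‖x - x̄‖ ≥ r(x̄) - r(x)`, so `r(x̄) ≤ Ψ̄(x) ≤ r(x*) + γ ln(m+1) + δ`.
Hence `r(x̄) - r(x*) ≤ γ ln(m+1) + δ`, and `G (γ ln(m+1) + δ)/(αρ - G) ≥ 0`.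
-/

open Real

section LogOneAddSumExp

variable {ι : Type*} [Fintype ι]

theorem Real.log_one_add_sum_exp_nonneg (a : ι → ℝ) : 0 ≤ log (1 + ∑ j, exp (a j)) :=
  log_nonneg <| le_add_of_nonneg_right <| Finset.sum_nonneg fun _ _ => (exp_pos _).le

theorem Real.le_log_one_add_sum_exp (a : ι → ℝ) (i : ι) : a i ≤ log (1 + ∑ j, exp (a j)) := by
  have hsum : exp (a i) ≤ ∑ j, exp (a j) :=
    Finset.single_le_sum (fun j _ => (exp_pos (a j)).le) (Finset.mem_univ i)
  rw [le_log_iff_exp_le (by positivity)]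
  linarith

theorem Real.le_mul_log_one_add_sum_exp_div {γ : ℝ} (hγ : 0 < γ) (a : ι → ℝ) (i : ι) :
    a i ≤ γ * log (1 + ∑ j, exp (a j / γ)) := by
  have h := le_log_one_add_sum_exp (fun j => a j / γ) i
  rwa [div_le_iff₀' hγ] at h

end LogOneAddSumExp

theorem le_add_mul_norm_sub_of_abs_sub_le {E : Type*} [SeminormedAddCommGroup E] {r : E → ℝ}
    {G : ℝ} (hr : ∀ a b, |r a - r b| ≤ G * ‖a - b‖) (x y : E) : r y ≤ r x + G * ‖x - y‖ := by
  have h := (abs_le.mp (hr y x)).2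
  rw [norm_sub_rev] at h
  linarith

theorem projected_point_suboptimality_bound_general (m d : ℕ) (hm : 1 ≤ m) (γ α δ G ρ : ℝ)
    (hγ : 0 < γ) (hα : 0 < α) (hδ : 0 ≤ δ) (hG : 0 ≤ G)
    (hαρ : G < α * ρ)
    (r : EuclideanSpace ℝ (Fin d) → ℝ)
    (hr : ∀ a b, |r a - r b| ≤ G * ‖a - b‖)
    (gt : Fin m → EuclideanSpace ℝ (Fin d) → ℝ)
    (K : Set (EuclideanSpace ℝ (Fin d)))
    (xstar : EuclideanSpace ℝ (Fin d))
    (x xbar : EuclideanSpace ℝ (Fin d))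
    (hproj : ∀ y ∈ K, ‖x - xbar‖ ≤ ‖x - y‖)
    (herr : x ∉ K → ρ * ‖x - xbar‖ ≤
      Finset.sup' Finset.univ ⟨⟨0, hm⟩, Finset.mem_univ _⟩ (fun i => gt i x))
    (hub : r x + γ * Real.log (1 + ∑ i, Real.exp (α * gt i x / γ)) ≤
      r xstar + γ * Real.log ((m : ℝ) + 1) + δ) :
    r xbar - r xstar ≤
      G * ((γ * Real.log ((m : ℝ) + 1) + δ) / (α * ρ - G)) +
        γ * Real.log ((m : ℝ) + 1) + δ := by
  set penalty := γ * log (1 + ∑ i, exp (α * gt i x / γ))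
  have hpenalty : α * ρ * ‖x - xbar‖ ≤ penalty := by
    by_cases hx : x ∈ K
    · have hD : ‖x - xbar‖ = 0 := le_antisymm (by simpa using hproj x hx) (norm_nonneg _)
      rw [hD, mul_zero]
      exact mul_nonneg hγ.le (log_one_add_sum_exp_nonneg _)
    · obtain ⟨i, -, hi⟩ := Finset.exists_mem_eq_sup' ⟨⟨0, hm⟩, Finset.mem_univ _⟩
        (fun i => gt i x)
      have hmax : α * (ρ * ‖x - xbar‖) ≤ α * gt i x :=
        mul_le_mul_of_nonneg_left (hi ▸ herr hx) hα.le
      rw [← mul_assoc] at hmax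
      exact hmax.trans (le_mul_log_one_add_sum_exp_div hγ (fun j => α * gt j x) i)
  have hsmoothing : 0 ≤ γ * log ((m : ℝ) + 1) + δ :=
    add_nonneg (mul_nonneg hγ.le (log_nonneg (by simp))) hδ
  have hslack : 0 ≤ G * ((γ * log ((m : ℝ) + 1) + δ) / (α * ρ - G)) :=
    mul_nonneg hG (div_nonneg hsmoothing (sub_pos.mpr hαρ).le)
  have hlip := le_add_mul_norm_sub_of_abs_sub_le hr x xbar
  linarith [mul_le_mul_of_nonneg_right hαρ.le (norm_nonneg (x - xbar))]

/-- Corollary 1 (Eq. (35)): the suboptimality of the projected point `x̄ = Π_K(x)` for the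
original constrained problem is controlled by the suboptimality `δ` for the augmented
problem plus the smoothing cost `γ ln(m+1)`. -/
theorem projected_point_suboptimality_bound (m d : ℕ) (hm : 1 ≤ m) (γ α δ G ρ : ℝ)
    (hγ : 0 < γ) (hα : 0 < α) (hδ : 0 ≤ δ) (hG : 0 ≤ G) (hρ : 0 < ρ)
    (hαρ : G < α * ρ)
    (r : EuclideanSpace ℝ (Fin d) → ℝ)
    (hr : ∀ a b, |r a - r b| ≤ G * ‖a - b‖)
    (gt : Fin m → EuclideanSpace ℝ (Fin d) → ℝ)
    (K : Set (EuclideanSpace ℝ (Fin d)))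
    (hK : K = {y | ∀ i, gt i y ≤ 0})
    (hKne : K.Nonempty) (hKcl : IsClosed K) (hKconv : Convex ℝ K)
    (xstar : EuclideanSpace ℝ (Fin d)) (hxstar : xstar ∈ K)
    (hmin : ∀ y ∈ K, r xstar ≤ r y)
    (x xbar : EuclideanSpace ℝ (Fin d)) (hxbar : xbar ∈ K)
    (hproj : ∀ y ∈ K, ‖x - xbar‖ ≤ ‖x - y‖)
    (herr : x ∉ K → ρ * ‖x - xbar‖ ≤
      Finset.sup' Finset.univ ⟨⟨0, hm⟩, Finset.mem_univ _⟩ (fun i => gt i x))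
    (hub : r x + γ * Real.log (1 + ∑ i, Real.exp (α * gt i x / γ)) ≤
      r xstar + γ * Real.log ((m : ℝ) + 1) + δ) :
    r xbar - r xstar ≤
      G * ((γ * Real.log ((m : ℝ) + 1) + δ) / (α * ρ - G)) +
        γ * Real.log ((m : ℝ) + 1) + δ :=
  projected_point_suboptimality_bound_general m d hm γ α δ G ρ hγ hα hδ hG hαρ r hr gt K xstar x
    xbar hproj herr hub
end

section
/- Let E be a real inner product space, let Φ : E → ℝ be differentiable with ‖∇Φ(a) − ∇Φ(b)‖ ≤ L_Φ ‖a − b‖ for all a, b ∈ E, let r : E → ℝ be convex, let η > 0, and let P : E → E satisfy, for all u, y ∈ E, (1/(2η)) ‖P u − u‖² + r(P u) + (1/(2η)) ‖y − P u‖² ≤ (1/(2η)) ‖y − u‖² + r(y) (i.e. P is the proximal operator of ηr with its strong-optimality property). Fix x ∈ E and v ∈ E, set x⁺ = P( x − η v ), and define the exact proximal gradient mapping 𝒢_η(x) = (1/η) ( x − P( x − η ∇Φ(x) ) ). Then, with Ψ = Φ + r, Ψ(x⁺) ≤ Ψ(x) − (η/8) ‖𝒢_η(x)‖² + (3η/4)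 ‖v − ∇Φ(x)‖² − ( 1/(4η) − L_Φ/2 ) ‖x − x⁺‖². -/
/-!
The descent lemma for `Φ` between `x` and `x⁺`, the strong-optimality inequality of the prox
step tested at `y = x`, and Young's inequality for `⟪∇Φ(x) - v, x⁺ - x⟫` give
`Ψ(x⁺) ≤ Ψ(x) + (η/2)‖v - ∇Φ(x)‖² - (1/(2η) - L/2)‖x - x⁺‖²`.
Since the prox is nonexpansive, `η‖𝒢_η(x)‖ ≤ ‖x - x⁺‖ + η‖v - ∇Φ(x)‖`, so
`(η/8)‖𝒢_η(x)‖² ≤ ‖x - x⁺‖²/(4η) + (η/4)‖v - ∇Φ(x)‖²`; adding this gives the claim.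
-/

open Set
open scoped RealInnerProductSpace

theorem Differentiable.le_add_inner_gradient_add_sq {E : Type*} [NormedAddCommGroup E]
    [InnerProductSpace ℝ E] [CompleteSpace E] {Φ : E → ℝ} (hΦ : Differentiable ℝ Φ)
    {L : ℝ} (hL : ∀ a b, ‖gradient Φ a - gradient Φ b‖ ≤ L * ‖a - b‖) (x y : E) :
    Φ y ≤ Φ x + ⟪gradient Φ x, y - x⟫ + L / 2 * ‖y - x‖ ^ 2 := by
  set d := y - x
  -- `Φ` along the segment minus its quadratic model; the Lipschitz bound makes it antitone
  let φ : ℝ → ℝ := fun t ↦ Φ (x + t • d) - t * ⟪gradient Φ x, d⟫ - L / 2 * t ^ 2 * ‖d‖ ^ 2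
  have hφ : ∀ t, HasDerivAt φ (⟪gradient Φ (x + t • d) - gradient Φ x, d⟫ - L * t * ‖d‖ ^ 2) t := by
    intro t
    have hline : HasDerivAt (fun t : ℝ ↦ x + t • d) d t := by
      simpa using ((hasDerivAt_id t).smul_const d).const_add x
    have hΦline := (hΦ (x + t • d)).hasFDerivAt.comp_hasDerivAt t hline
    rw [← inner_gradient_left] at hΦline
    refine ((hΦline.sub ((hasDerivAt_id t).mul_const ⟪gradient Φ x, d⟫)).sub
      (((hasDerivAt_pow 2 t).const_mul (L / 2)).mul_const (‖d‖ ^ 2))).congr_deriv ?_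
    simp only [inner_sub_left]
    ring
  have hφ' : ∀ t ∈ interior (Ici (0 : ℝ)),
      ⟪gradient Φ (x + t • d) - gradient Φ x, d⟫ - L * t * ‖d‖ ^ 2 ≤ 0 := by
    intro t ht
    rw [interior_Ici, mem_Ioi] at ht
    have := hL (x + t • d) x
    rw [add_sub_cancel_left, norm_smul, Real.norm_of_nonneg ht.le] at this
    nlinarith [real_inner_le_norm (gradient Φ (x + t • d) - gradient Φ x) d, norm_nonneg d]
  have hanti : AntitoneOn φ (Ici 0) :=
    antitoneOn_of_hasDerivWithinAt_nonpos (convex_Ici 0)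
      (fun t _ ↦ (hφ t).continuousAt.continuousWithinAt) (fun t _ ↦ (hφ t).hasDerivWithinAt) hφ'
  have h01 : φ 1 ≤ φ 0 := hanti (mem_Ici.2 le_rfl) (mem_Ici.2 zero_le_one) zero_le_one
  simp only [φ, one_smul, zero_smul, add_zero, d, add_sub_cancel] at h01
  linarith

theorem LipschitzWith.norm_sub_apply_sub_le {F : Type*} [SeminormedAddCommGroup F] {P : F → F}
    (hP : LipschitzWith 1 P) (x g v : F) :
    ‖x - P (x - g)‖ ≤ ‖x - P (x - v)‖ + ‖g - v‖ :=
  calc ‖x - P (x - g)‖ ≤ ‖x - P (x - v)‖ + ‖P (x - v) - P (x - g)‖ :=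
        norm_sub_le_norm_sub_add_norm_sub _ _ _
    _ ≤ ‖x - P (x - v)‖ + ‖g - v‖ := by
        gcongr
        simpa [dist_eq_norm] using hP.dist_le_mul (x - v) (x - g)

section ProximalMap

variable {E : Type*} [NormedAddCommGroup E]

/-- The strong-optimality property of `P = prox_{η r}`: `P u` minimizes
`y ↦ r y + ‖y - u‖² / (2η)` with quadratic growth. -/
def IsProximalMap (r : E → ℝ) (η : ℝ) (P : E → E) : Prop :=
  ∀ u y : E, (1 / (2 * η)) * ‖P u - u‖ ^ 2 + r (P u) + (1 / (2 * η)) * ‖y - P u‖ ^ 2 ≤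
    (1 / (2 * η)) * ‖y - u‖ ^ 2 + r y

namespace IsProximalMap

variable {r : E → ℝ} {η : ℝ} {P : E → E}

theorem norm_sub_sq_add_le (hP : IsProximalMap r η P) (hη : 0 < η) (u y : E) :
    ‖P u - u‖ ^ 2 + 2 * η * r (P u) + ‖y - P u‖ ^ 2 ≤ ‖y - u‖ ^ 2 + 2 * η * r y := by
  have h := mul_le_mul_of_nonneg_left (hP u y) (by positivity : 0 ≤ 2 * η)
  field_simp at h
  linarith

variable [InnerProductSpace ℝ E]

theorem norm_sq_le_inner (hP : IsProximalMap r η P) (hη : 0 < η) (u u' : E) :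
    ‖P u - P u'‖ ^ 2 ≤ ⟪P u - P u', u - u'⟫ := by
  have h := add_le_add (hP.norm_sub_sq_add_le hη u (P u')) (hP.norm_sub_sq_add_le hη u' (P u))
  rw [show P u' - u = (P u - u) - (P u - P u') by abel,
    show P u - u' = (P u - P u') + (P u' - u') by abel, norm_sub_rev (P u') (P u),
    norm_sub_sq_real (P u - u), norm_add_sq_real] at h
  rw [show u - u' = (P u - P u') + (P u' - u') - (P u - u) by abel, inner_sub_right,
    inner_add_right, real_inner_self_eq_norm_sq, real_inner_comm (P u - u)]
  linarith

theorem lipschitzWith_one (hP : IsProximalMap r η P) (hη : 0 < η) : LipschitzWith 1 P := by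
  refine LipschitzWith.of_dist_le_mul fun u u' ↦ ?_
  simp only [NNReal.coe_one, one_mul, dist_eq_norm]
  have h := (hP.norm_sq_le_inner hη u u').trans (real_inner_le_norm _ _)
  nlinarith [norm_nonneg (P u - P u'), norm_nonneg (u - u')]

theorem add_inner_add_norm_sq_le (hP : IsProximalMap r η P) (hη : 0 < η) (x v : E) :
    r (P (x - η • v)) + ⟪v, P (x - η • v) - x⟫ + 1 / η * ‖x - P (x - η • v)‖ ^ 2 ≤ r x := by
  have h := hP (x - η • v) x
  rw [sub_sub_cancel, show P (x - η • v) - (x - η • v) = (P (x - η • v) - x) + η • v by abel,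
    norm_add_sq_real, norm_sub_rev x, inner_smul_right, real_inner_comm, norm_smul,
    Real.norm_of_nonneg hη.le] at h
  rw [norm_sub_rev x]
  field_simp at h ⊢
  linarith

end IsProximalMap

end ProximalMap

theorem inexact_prox_gradient_descent_mapping_general
    {E : Type*} [NormedAddCommGroup E] [InnerProductSpace ℝ E] [CompleteSpace E]
    (Φ : E → ℝ) (hΦ : Differentiable ℝ Φ) (LΦ : ℝ)
    (hL : ∀ a b, ‖gradient Φ a - gradient Φ b‖ ≤ LΦ * ‖a - b‖)
    (r : E → ℝ)
    (η : ℝ) (hη : 0 < η) (P : E → E)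
    (hP : ∀ u y : E, (1 / (2 * η)) * ‖P u - u‖ ^ 2 + r (P u) +
        (1 / (2 * η)) * ‖y - P u‖ ^ 2 ≤ (1 / (2 * η)) * ‖y - u‖ ^ 2 + r y)
    (x v xp : E) (hxp : xp = P (x - η • v))
    (Gx : E) (hGx : Gx = (1 / η) • (x - P (x - η • gradient Φ x))) :
    Φ xp + r xp ≤ Φ x + r x - (η / 8) * ‖Gx‖ ^ 2 +
      (3 * η / 4) * ‖v - gradient Φ x‖ ^ 2 -
        (1 / (4 * η) - LΦ / 2) * ‖x - xp‖ ^ 2 := by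
  have hprox : IsProximalMap r η P := hP
  set g := gradient Φ x
  have descent : Φ xp ≤ Φ x + ⟪g, xp - x⟫ + LΦ / 2 * ‖x - xp‖ ^ 2 := by
    simpa only [norm_sub_rev xp x] using hΦ.le_add_inner_gradient_add_sq hL x xp
  have step : r xp + ⟪v, xp - x⟫ + 1 / η * ‖x - xp‖ ^ 2 ≤ r x := hxp ▸ hprox.add_inner_add_norm_sq_le hη x v
  have cauchySchwarz : ⟪g - v, xp - x⟫ ≤ ‖v - g‖ * ‖x - xp‖ := by
    rw [norm_sub_rev v, norm_sub_rev x]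
    exact real_inner_le_norm _ _
  have young := two_mul_le_add_mul_sq hη (a := ‖v - g‖) (b := ‖x - xp‖)
  have comparison : η * ‖Gx‖ ≤ ‖x - xp‖ + η * ‖v - g‖ := by
    have := (hprox.lipschitzWith_one hη).norm_sub_apply_sub_le x (η • g) (η • v)
    rw [← hxp, ← smul_sub, norm_smul, Real.norm_of_nonneg hη.le, norm_sub_rev g v] at this
    rwa [hGx, norm_smul, Real.norm_of_nonneg (by positivity), ← mul_assoc,
      mul_one_div_cancel hη.ne', one_mul]
  have gradMapping : η / 8 * ‖Gx‖ ^ 2 ≤ 1 / (4 * η) * ‖x - xp‖ ^ 2 + η / 4 * ‖v - g‖ ^ 2 := by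
    have := (pow_le_pow_left₀ (by positivity) comparison 2).trans add_sq_le
    field_simp
    nlinarith
  rw [inner_sub_left] at cauchySchwarz
  linear_combination descent + step + cauchySchwarz + young / 2 + gradMapping

/-- Lemma 4, second inequality (Eq. (53)): per-step decrease estimate for the inexact
proximal gradient step, in terms of the exact proximal gradient mapping `𝒢_η(x)`. -/
theorem inexact_prox_gradient_descent_mapping
    {E : Type*} [NormedAddCommGroup E] [InnerProductSpace ℝ E] [CompleteSpace E]
    (Φ : E → ℝ) (hΦ : Differentiable ℝ Φ) (LΦ : ℝ)
    (hL : ∀ a b, ‖gradient Φ a - gradient Φ b‖ ≤ LΦ * ‖a - b‖)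
    (r : E → ℝ) (hr : ConvexOn ℝ Set.univ r)
    (η : ℝ) (hη : 0 < η) (P : E → E)
    (hP : ∀ u y : E, (1 / (2 * η)) * ‖P u - u‖ ^ 2 + r (P u) +
        (1 / (2 * η)) * ‖y - P u‖ ^ 2 ≤ (1 / (2 * η)) * ‖y - u‖ ^ 2 + r y)
    (x v xp : E) (hxp : xp = P (x - η • v))
    (Gx : E) (hGx : Gx = (1 / η) • (x - P (x - η • gradient Φ x))) :
    Φ xp + r xp ≤ Φ x + r x - (η / 8) * ‖Gx‖ ^ 2 +
      (3 * η / 4) * ‖v - gradient Φ x‖ ^ 2 -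
        (1 / (4 * η) - LΦ / 2) * ‖x - xp‖ ^ 2 :=
  inexact_prox_gradient_descent_mapping_general Φ hΦ LΦ hL r η hη P hP x v xp hxp Gx hGx
end
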